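/- Let G be a groupoid and H_1,…,H_n wide subgroupoids satisfying: (i) G = H_1⋯H_n (every element of G is a composite h_1⋯h_n with h_i ∈ H_i); (ii) each H_i is normal in G; (iii) H_i ∩ (H_1⋯H_{i−1}H_{i+1}⋯H_n) = G_0 for every i. Then for all i ≠ j and all x ∈ H_i, y ∈ H_j with r(y)=d(x)=r(x)=d(y), one has xy = yx. -/

import Mathlib

universe u v

/-- A groupoid in the axiomatic sense: a set with a partial multiplication
(`D g h` means the product `gh` is defined, `mul` is a total function whose
value is only meaningful when the product is defined) and a total inversion. -/
class Gpd (G : Type u) where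
  mul : G → G → G
  inv : G → G
  D : G → G → Prop
  inv_left : ∀ g, D (inv g) g
  inv_right : ∀ g, D g (inv g)
  D_iff : ∀ g h, D g h ↔ mul (inv g) g = mul h (inv h)
  assoc : ∀ g h k, D g h → D h k →
    D (mul g h) k ∧ D g (mul h k) ∧ mul (mul g h) k = mul g (mul h k)
  inv_cancel_left : ∀ g h, D g h → mul (inv g) (mul g h) = h
  inv_cancel_right : ∀ g h, D g h → mul (mul g h) (inv h) = g

namespace Gpd

variable {G : Type u} [Gpd G]

/-- The domain `d(g) = g⁻¹g`. -/
def d (g : G) : G := mul (inv g) g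

/-- The range `r(g) = gg⁻¹`. -/
def r (g : G) : G := mul g (inv g)

/-- Identities (= idempotents) of the groupoid. -/
def IsId (e : G) : Prop := D e e ∧ mul e e = e

/-- The set `G₀` of identities of `G`. -/
def objs (G : Type u) [Gpd G] : Set G := {e | IsId e}

/-- Subgroupoid: a nonempty subset closed under inverses and defined products. -/
def IsSubgroupoid (H : Set G) : Prop :=
  H.Nonempty ∧ (∀ h ∈ H, inv h ∈ H) ∧
    ∀ g h : G, g ∈ H → h ∈ H → D g h → mul g h ∈ H

/-- Wide subgroupoid: a subgroupoid containing all identities of `G`. -/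
def IsWide (H : Set G) : Prop := IsSubgroupoid H ∧ objs G ⊆ H

/-- Normal subgroupoid: wide and closed under defined conjugations `g⁻¹hg`. -/
def IsNormal (H : Set G) : Prop :=
  IsWide H ∧ ∀ g h : G, h ∈ H → D (inv g) h → D (mul (inv g) h) g →
    mul (mul (inv g) h) g ∈ H

end Gpd

open Gpd

/-- `IsProd l g`: `g` is the (everywhere defined) composite of the list `l`. -/
inductive IsProd {G : Type u} [Gpd G] : List G → G → Prop
  | single (g : G) : IsProd [g] g
  | cons {l : List G} {p : G} (g : G) (hp : IsProd l p) (hD : Gpd.D g p) :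
      IsProd (g :: l) (Gpd.mul g p)

/-- `H₁⋯H_n`: the set of all defined composites `h₁⋯h_n` with `h_i ∈ H_i`. -/
def listProd {G : Type u} [Gpd G] (Hs : List (Set G)) : Set G :=
  {g | ∃ l : List G, List.Forall₂ (· ∈ ·) l Hs ∧ IsProd l g}

/-!
The commutator `c = x y x⁻¹ y⁻¹` lies in `H_j`, as `x y x⁻¹ ∈ H_j` by normality of `H_j`, and in
`H_i`, as `c = x (y x⁻¹ y⁻¹)` with `y x⁻¹ y⁻¹ ∈ H_i` by normality of `H_i`. Since `H_j` is one of the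
factors of `H_1⋯H_{i-1}H_{i+1}⋯H_n` and all factors contain the identities, (iii) forces `c ∈ G_0`,
and `c` being an identity gives `x y x⁻¹ = y`, i.e. `x y = y x`. The hypothesis on domains and
ranges puts `x` and `y` in the vertex group at `d x`, where all these products are defined.
-/

namespace Gpd

variable {G : Type u} [Gpd G] {e g h x y : G}

theorem D_iff_d_eq_r : D g h ↔ d g = r h := D_iff g h

theorem d_inv (g : G) : d (inv g) = r g := D_iff_d_eq_r.mp (inv_left g)

theorem r_inv (g : G) : r (inv g) = d g := (D_iff_d_eq_r.mp (inv_right g)).symm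

theorem D_r_self (g : G) : D (r g) g :=
  (assoc g (inv g) g (inv_right g) (inv_left g)).1

theorem D_d_self (g : G) : D g (d g) :=
  (assoc g (inv g) g (inv_right g) (inv_left g)).2.1

theorem r_mul_self (g : G) : mul (r g) g = g := by
  have ha := (assoc (inv (inv g)) (inv g) g (inv_left (inv g)) (inv_left g)).2.2
  rwa [show mul (inv (inv g)) (inv g) = r g from d_inv g,
    inv_cancel_left (inv g) g (inv_left g)] at ha

theorem mul_d_self (g : G) : mul g (d g) = g := by
  rw [d, ← (assoc g (inv g) g (inv_right g) (inv_left g)).2.2]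
  exact r_mul_self g

theorem inv_inv (g : G) : inv (inv g) = g :=
  calc inv (inv g) = mul (inv (inv g)) (d (inv (inv g))) := (mul_d_self _).symm
    _ = mul (inv (inv g)) (d g) := by rw [d_inv, r_inv]
    _ = g := inv_cancel_left (inv g) g (inv_left g)

theorem d_mul (hD : D g h) : d (mul g h) = d h := by
  have ha := assoc g h (d h) hD (D_d_self h)
  have h' := inv_cancel_left (mul g h) (d h) ha.1
  rwa [ha.2.2, mul_d_self] at h'

theorem r_mul (hD : D g h) : r (mul g h) = r g := by
  have ha := assoc (r g) g h (D_r_self g) hD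
  have h' := inv_cancel_right (r g) (mul g h) ha.2.1
  rwa [← ha.2.2, r_mul_self] at h'

theorem isId_d (g : G) : IsId (d g) := by
  have ha := assoc (d g) (inv g) g
    (assoc (inv g) g (inv g) (inv_left g) (inv_right g)).1 (inv_left g)
  have hdg : mul (d g) (inv g) = inv g := inv_cancel_right (inv g) g (inv_left g)
  refine ⟨ha.2.1, ?_⟩
  calc mul (d g) (d g) = mul (mul (d g) (inv g)) g := ha.2.2.symm
    _ = d g := by rw [hdg]; rfl

theorem isId_r (g : G) : IsId (r g) := by
  rw [← d_inv]
  exact isId_d (inv g)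

theorem IsId.d_eq (he : IsId e) : d e = e := by
  have hee := inv_cancel_left e e he.1
  rwa [he.2] at hee

theorem IsId.mul_eq (he : IsId e) (hD : D e g) : mul e g = g := by
  rw [← he.d_eq, D_iff_d_eq_r.mp hD, r_mul_self]

theorem inv_mul_cancel_right (hD : D g (inv h)) : mul (mul g (inv h)) h = g := by
  have hd : d h = d g := by rw [D_iff_d_eq_r.mp hD, r_inv]
  rw [(assoc g (inv h) h hD (inv_left h)).2.2]
  show mul g (d h) = g
  rw [hd, mul_d_self]

theorem eq_of_isId_mul_inv (hD : D g (inv h)) (hid : IsId (mul g (inv h))) : g = h := by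
  have hDh : D (mul g (inv h)) h := D_iff_d_eq_r.mpr (by rw [d_mul hD, d_inv])
  rw [← inv_mul_cancel_right hD, hid.mul_eq hDh]

def vertexGroup (e : G) : Set G := {g | d g = e ∧ r g = e}

theorem D_of_mem_vertexGroup (hg : g ∈ vertexGroup e) (hh : h ∈ vertexGroup e) : D g h :=
  D_iff_d_eq_r.mpr (hg.1.trans hh.2.symm)

theorem mul_mem_vertexGroup (hg : g ∈ vertexGroup e) (hh : h ∈ vertexGroup e) :
    mul g h ∈ vertexGroup e :=
  ⟨(d_mul (D_of_mem_vertexGroup hg hh)).trans hh.1,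
    (r_mul (D_of_mem_vertexGroup hg hh)).trans hg.2⟩

theorem inv_mem_vertexGroup (hg : g ∈ vertexGroup e) : inv g ∈ vertexGroup e :=
  ⟨(d_inv g).trans hg.2, (r_inv g).trans hg.1⟩

section Subgroupoid

variable {H : Set G}

theorem IsSubgroupoid.inv_mem (hH : IsSubgroupoid H) (hg : g ∈ H) : inv g ∈ H := hH.2.1 g hg

theorem IsSubgroupoid.mul_mem (hH : IsSubgroupoid H) (hg : g ∈ H) (hh : h ∈ H) (hD : D g h) :
    mul g h ∈ H :=
  hH.2.2 g h hg hh hD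

theorem IsNormal.mul_mul_inv_mem (hH : IsNormal H) (hh : h ∈ H) (hD : D g h)
    (hD' : D (mul g h) (inv g)) : mul (mul g h) (inv g) ∈ H := by
  simpa only [inv_inv] using
    hH.2 (inv g) h hh (by rwa [inv_inv]) (by rwa [inv_inv])

end Subgroupoid

def commutator (x y : G) : G := mul (mul (mul x y) (inv x)) (inv y)

section Commutator

variable (hx : x ∈ vertexGroup e) (hy : y ∈ vertexGroup e)
include hx hy

theorem commutator_eq_mul : commutator x y = mul x (mul (mul y (inv x)) (inv y)) := by
  have hyx := mul_mem_vertexGroup hy (inv_mem_vertexGroup hx)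
  have ha₁ := assoc x y (inv x) (D_of_mem_vertexGroup hx hy)
    (D_of_mem_vertexGroup hy (inv_mem_vertexGroup hx))
  have ha₂ := assoc x (mul y (inv x)) (inv y) (D_of_mem_vertexGroup hx hyx)
    (D_of_mem_vertexGroup hyx (inv_mem_vertexGroup hy))
  rw [commutator, ha₁.2.2, ha₂.2.2]

theorem commutator_mem_left {H : Set G} (hH : IsNormal H) (hxH : x ∈ H) : commutator x y ∈ H := by
  have hyx := mul_mem_vertexGroup hy (inv_mem_vertexGroup hx)
  have hyxy := mul_mem_vertexGroup hyx (inv_mem_vertexGroup hy)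
  rw [commutator_eq_mul hx hy]
  refine hH.1.1.mul_mem hxH (hH.mul_mul_inv_mem (hH.1.1.inv_mem hxH) ?_ ?_)
    (D_of_mem_vertexGroup hx hyxy)
  · exact D_of_mem_vertexGroup hy (inv_mem_vertexGroup hx)
  · exact D_of_mem_vertexGroup hyx (inv_mem_vertexGroup hy)

theorem commutator_mem_right {K : Set G} (hK : IsNormal K) (hyK : y ∈ K) : commutator x y ∈ K := by
  have hxy := mul_mem_vertexGroup hx hy
  have hxyx := mul_mem_vertexGroup hxy (inv_mem_vertexGroup hx)
  refine hK.1.1.mul_mem (hK.mul_mul_inv_mem hyK ?_ ?_) (hK.1.1.inv_mem hyK) ?_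
  · exact D_of_mem_vertexGroup hx hy
  · exact D_of_mem_vertexGroup hxy (inv_mem_vertexGroup hx)
  · exact D_of_mem_vertexGroup hxyx (inv_mem_vertexGroup hy)

theorem mul_comm_of_isId_commutator (hc : IsId (commutator x y)) : mul x y = mul y x := by
  have hxy := mul_mem_vertexGroup hx hy
  have hconj : mul (mul x y) (inv x) = y := eq_of_isId_mul_inv
    (D_of_mem_vertexGroup (mul_mem_vertexGroup hxy (inv_mem_vertexGroup hx))
      (inv_mem_vertexGroup hy)) hc
  calc mul x y = mul (mul (mul x y) (inv x)) x :=
        (inv_mul_cancel_right (D_of_mem_vertexGroup hxy (inv_mem_vertexGroup hx))).symm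
    _ = mul y x := by rw [hconj]

end Commutator

end Gpd

section ListProd

variable {G : Type u} [Gpd G] {L : List (Set G)} {K H : Set G} {x p : G}

theorem mem_listProd_singleton (hx : x ∈ K) : x ∈ listProd [K] :=
  ⟨[x], .cons hx .nil, .single x⟩

theorem mul_mem_listProd_cons (hx : x ∈ K) (hp : p ∈ listProd L) (hD : D x p) :
    mul x p ∈ listProd (K :: L) := by
  obtain ⟨l, hl, hlp⟩ := hp
  exact ⟨x :: l, .cons hx hl, .cons x hlp hD⟩

theorem objs_subset_listProd (hL : ∀ H ∈ L, objs G ⊆ H) (hne : L ≠ []) :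
    objs G ⊆ listProd L := by
  intro e he
  induction L with
  | nil => contradiction
  | cons K tl ih =>
    have heK := hL K List.mem_cons_self
    rcases eq_or_ne tl [] with rfl | htl
    · exact mem_listProd_singleton (heK he)
    · have h := mul_mem_listProd_cons (heK he)
        (ih (fun H hH => hL H (List.mem_cons_of_mem K hH)) htl) he.1
      rwa [he.2] at h

theorem mem_listProd_of_mem (hL : ∀ H ∈ L, objs G ⊆ H) (hH : H ∈ L) (hx : x ∈ H) :
    x ∈ listProd L := by
  induction L with
  | nil => simp at hH
  | cons K tl ih =>
    have htl : ∀ H ∈ tl, objs G ⊆ H := fun H hH => hL H (List.mem_cons_of_mem K hH)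
    rcases List.mem_cons.mp hH with rfl | hH
    · rcases eq_or_ne tl [] with rfl | hne
      · exact mem_listProd_singleton hx
      · have h := mul_mem_listProd_cons hx (objs_subset_listProd htl hne (isId_d x)) (D_d_self x)
        rwa [mul_d_self] at h
    · have h := mul_mem_listProd_cons (hL K List.mem_cons_self (isId_r x)) (ih htl hH) (D_r_self x)
      rwa [r_mul_self] at h

end ListProd

theorem commute_of_decomposition_general {G : Type u} [Gpd G] (Hs : List (Set G))
    (h2 : ∀ H ∈ Hs, IsNormal H)
    (h3 : ∀ (i : ℕ) (hi : i < Hs.length),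
      Hs.get ⟨i, hi⟩ ∩ listProd (Hs.eraseIdx i) = objs G) :
    ∀ (i j : ℕ) (hi : i < Hs.length) (hj : j < Hs.length), i ≠ j →
      ∀ x ∈ Hs.get ⟨i, hi⟩, ∀ y ∈ Hs.get ⟨j, hj⟩,
        r y = d x → d x = r x → r x = d y → Gpd.mul x y = Gpd.mul y x := by
  intro i j hi hj hij x hx y hy hry hdr hrd
  have hxe : x ∈ vertexGroup (d x) := ⟨rfl, hdr.symm⟩
  have hye : y ∈ vertexGroup (d x) := ⟨(hdr.trans hrd).symm, hry⟩
  have hc_i := commutator_mem_left hxe hye (h2 _ (List.getElem_mem hi)) hx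
  have hc_j := commutator_mem_right hxe hye (h2 _ (List.getElem_mem hj)) hy
  have hc_rest : commutator x y ∈ listProd (Hs.eraseIdx i) :=
    mem_listProd_of_mem (fun H hH => (h2 H (List.eraseIdx_subset hH)).1.2)
      (List.mem_eraseIdx_iff_getElem.mpr ⟨j, hj, hij.symm, rfl⟩) hc_j
  have hc_id : commutator x y ∈ objs G := h3 i hi ▸ ⟨hc_i, hc_rest⟩
  exact mul_comm_of_isId_commutator hxe hye hc_id

/-- under (i),(ii),(iii), elements of distinct factors with matching
(coinciding) domains and ranges commute. -/
theorem commute_of_decomposition {G : Type u} [Gpd G] (Hs : List (Set G))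
    (hwide : ∀ H ∈ Hs, IsWide H)
    (h1 : ∀ g : G, g ∈ listProd Hs)
    (h2 : ∀ H ∈ Hs, IsNormal H)
    (h3 : ∀ (i : ℕ) (hi : i < Hs.length),
      Hs.get ⟨i, hi⟩ ∩ listProd (Hs.eraseIdx i) = objs G) :
    ∀ (i j : ℕ) (hi : i < Hs.length) (hj : j < Hs.length), i ≠ j →
      ∀ x ∈ Hs.get ⟨i, hi⟩, ∀ y ∈ Hs.get ⟨j, hj⟩,
        r y = d x → d x = r x → r x = d y → Gpd.mul x y = Gpd.mul y x :=
  commute_of_decomposition_general Hs h2 h3
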